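/- Let G and H be nontrivial connected graphs, neither of which has an isolatable vertex. If G × H is well-covered, then G and H are both complete graphs of the same order. -/

import Mathlib

/-- The direct (tensor) product of two simple graphs. -/
def directProd {V W : Type*} (G : SimpleGraph V) (H : SimpleGraph W) :
    SimpleGraph (V × W) where
  Adj x y := G.Adj x.1 y.1 ∧ H.Adj x.2 y.2
  symm := ⟨fun x y h => ⟨h.1.symm, h.2.symm⟩⟩
  loopless := ⟨fun x h => G.loopless.irrefl x.1 h.1⟩

/-- `s` is an independent set of `G`. -/
def IsIndep {V : Type*} (G : SimpleGraph V) (s : Set V) : Prop :=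
  ∀ ⦃u⦄, u ∈ s → ∀ ⦃v⦄, v ∈ s → ¬ G.Adj u v

/-- `s` is a maximal independent set of `G`. -/
def IsMaxIndep {V : Type*} (G : SimpleGraph V) (s : Set V) : Prop :=
  IsIndep G s ∧ ∀ t, IsIndep G t → s ⊆ t → s = t

/-- A graph is well-covered if all maximal independent sets have the same cardinality. -/
def WellCovered {V : Type*} (G : SimpleGraph V) : Prop :=
  ∀ s t, IsMaxIndep G s → IsMaxIndep G t → s.ncard = t.ncard

/-- The independence number of `G`. -/
noncomputable def indepNum {V : Type*} (G : SimpleGraph V) : ℕ :=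
  sSup {n | ∃ s, IsIndep G s ∧ s.ncard = n}

/-- The independent domination number of `G`: the minimum size of a maximal independent set. -/
noncomputable def iNum {V : Type*} (G : SimpleGraph V) : ℕ :=
  sInf {n | ∃ s, IsMaxIndep G s ∧ s.ncard = n}

/-- The closed neighborhood `N[s]` of a set of vertices. -/
def closedNbhd {V : Type*} (G : SimpleGraph V) (s : Set V) : Set V :=
  s ∪ {v | ∃ u ∈ s, G.Adj u v}

/-- `G` has no isolated vertices. -/
def NoIsolated {V : Type*} (G : SimpleGraph V) : Prop := ∀ v, ∃ u, G.Adj v u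

/-- A vertex `v` is isolatable if some independent set `I` leaves `v` isolated in `G - N[I]`. -/
def Isolatable {V : Type*} (G : SimpleGraph V) (v : V) : Prop :=
  ∃ I : Set V, IsIndep G I ∧ v ∉ closedNbhd G I ∧ ∀ u ∉ closedNbhd G I, ¬ G.Adj v u

/-!
Fix a maximal independent set `J` of `H`. Since `G` has no isolatable vertex and `H` no isolated
vertex, every independent set `I` of `G` gives the maximal independent set
`I × W ∪ (V ∖ N[I]) × J` of `G × H`. Comparing its size with that of `V × J` (the case `I = ∅`),
well-coveredness yields `|I| |W| = |N[I]| |J|`. For `I = {v}` this says that all closed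
neighbourhoods have size `|W| / |J|`, and for a non-adjacent pair `I = {u, v}` that `N[u]` and
`N[v]` are disjoint; so `G` has no induced path on three vertices and, being connected, is complete.
Then `N[v] = V` gives `|W| = |V| |J| ≥ |V|`, and symmetrically `|V| ≥ |W|`.
-/

open Set SimpleGraph

section

variable {V W : Type*}

section Independence

variable {G : SimpleGraph V}

lemma isIndep_empty (G : SimpleGraph V) : IsIndep G ∅ := by
  simp [IsIndep]

lemma isIndep_singleton (v : V) : IsIndep G {v} := by
  simp [IsIndep]

lemma isIndep_pair {u v : V} (huv : ¬ G.Adj u v) : IsIndep G {u, v} := by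
  rintro a (rfl | rfl) b (rfl | rfl) hab
  exacts [hab.ne rfl, huv hab, huv hab.symm, hab.ne rfl]

lemma closedNbhd_empty (G : SimpleGraph V) : closedNbhd G ∅ = ∅ := by
  simp [closedNbhd]

lemma closedNbhd_union (s t : Set V) :
    closedNbhd G (s ∪ t) = closedNbhd G s ∪ closedNbhd G t := by
  ext x
  simp only [closedNbhd, mem_union]
  grind

lemma mem_closedNbhd_singleton {u v : V} : v ∈ closedNbhd G {u} ↔ v = u ∨ G.Adj u v := by
  simp [closedNbhd]

lemma closedNbhd_top_singleton (v : V) : closedNbhd (⊤ : SimpleGraph V) {v} = univ := by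
  ext u
  simp only [mem_closedNbhd_singleton, top_adj, mem_univ, iff_true]
  exact (em (u = v)).imp_right Ne.symm

lemma isMaxIndep_iff {s : Set V} : IsMaxIndep G s ↔ IsIndep G s ∧ closedNbhd G s = univ := by
  refine ⟨fun hs => ⟨hs.1, eq_univ_of_forall fun v => by_contra fun hv => ?_⟩,
    fun ⟨hs, hdom⟩ => ⟨hs, fun t ht hst => (hst.antisymm fun v hvt => ?_)⟩⟩
  · have hvs : v ∉ s := fun h => hv (Or.inl h)
    have hindep : IsIndep G (insert v s) := by
      rintro a (rfl | ha) b (rfl | hb) hab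
      · exact G.loopless.irrefl _ hab
      · exact hv (Or.inr ⟨b, hb, hab.symm⟩)
      · exact hv (Or.inr ⟨a, ha, hab⟩)
      · exact hs.1 ha hb hab
    exact hvs (hs.2 _ hindep (subset_insert v s) ▸ mem_insert v s)
  · rcases (hdom ▸ mem_univ v : v ∈ closedNbhd G s) with hv | ⟨u, hu, huv⟩
    · exact hv
    · exact (ht (hst hu) hvt huv).elim

lemma exists_isMaxIndep [Finite V] (G : SimpleGraph V) : ∃ s, IsMaxIndep G s := by
  obtain ⟨s, hs, hmax⟩ := (toFinite {s : Set V | IsIndep G s}).exists_maximalFor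
    ncard _ ⟨∅, isIndep_empty G⟩
  exact ⟨s, hs, fun t ht hst =>
    eq_of_subset_of_ncard_le hst (hmax ht (ncard_le_ncard hst)) (toFinite t)⟩

lemma IsMaxIndep.nonempty [Nonempty V] {s : Set V} (hs : IsMaxIndep G s) : s.Nonempty := by
  obtain ⟨v⟩ := ‹Nonempty V›
  have hv : v ∈ closedNbhd G s := (isMaxIndep_iff.1 hs).2 ▸ mem_univ v
  rcases hv with hv | ⟨u, hu, -⟩
  exacts [⟨v, hv⟩, ⟨u, hu⟩]

lemma IsMaxIndep.preimage {G' : SimpleGraph W} (e : G ≃g G') {t : Set W}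
    (ht : IsMaxIndep G' t) : IsMaxIndep G (e ⁻¹' t) := by
  refine ⟨fun a ha b hb hab => ht.1 ha hb (e.map_adj_iff.2 hab), fun u hu htu => ?_⟩
  have hu' : IsIndep G' (e.symm ⁻¹' u) := fun a ha b hb hab =>
    hu ha hb (e.symm.map_adj_iff.2 hab)
  have htu' : t ⊆ e.symm ⁻¹' u := fun x hx => htu (by simpa using hx)
  rw [ht.2 _ hu' htu', ← preimage_comp]
  simp

lemma WellCovered.of_iso {G' : SimpleGraph W} (e : G ≃g G') (hG : WellCovered G) :
    WellCovered G' := by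
  intro s t hs ht
  have hcard (u : Set W) : (e ⁻¹' u).ncard = u.ncard :=
    ncard_preimage_of_injective_subset_range e.injective (by simp)
  rw [← hcard s, ← hcard t]
  exact hG _ _ (hs.preimage e) (ht.preimage e)

end Independence

def directProdComm (G : SimpleGraph V) (H : SimpleGraph W) :
    directProd G H ≃g directProd H G where
  toEquiv := Equiv.prodComm V W
  map_rel_iff' := and_comm

lemma eq_top_of_adj_of_adj {G : SimpleGraph V} (hG : G.Preconnected)
    (h : ∀ u w v, G.Adj u w → G.Adj w v → u ≠ v → G.Adj u v) : G = ⊤ := by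
  ext x y
  refine ⟨G.ne_of_adj, fun hxy => by_contra fun hnadj => ?_⟩
  obtain ⟨p, hp⟩ := (hG x y).exists_path_of_dist
  obtain ⟨a, b, c, hab, hbc, hac, hne⟩ := Walk.exists_adj_adj_not_adj_ne hp.2
    ((hG x y).one_lt_dist_of_ne_of_not_adj hxy hnadj)
  exact hac (h a b c hab hbc hne)

section DirectProduct

variable {G : SimpleGraph V} {H : SimpleGraph W}

lemma isMaxIndep_directProd (hGiso : ∀ v, ¬ Isolatable G v) (hH : NoIsolated H)
    {I : Set V} (hI : IsIndep G I) {J : Set W} (hJ : IsMaxIndep H J) :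
    IsMaxIndep (directProd G H) (I ×ˢ univ ∪ (closedNbhd G I)ᶜ ×ˢ J) := by
  refine isMaxIndep_iff.2 ⟨?_, eq_univ_of_forall fun ⟨g, h⟩ => ?_⟩
  · rintro ⟨a1, a2⟩ ha ⟨b1, b2⟩ hb ⟨hab1, hab2⟩
    rcases ha with ⟨ha1, -⟩ | ⟨ha1, ha2⟩ <;> rcases hb with ⟨hb1, -⟩ | ⟨hb1, hb2⟩
    · exact hI ha1 hb1 hab1
    · exact hb1 (Or.inr ⟨a1, ha1, hab1⟩)
    · exact ha1 (Or.inr ⟨b1, hb1, hab1.symm⟩)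
    · exact hJ.1 ha2 hb2 hab2
  by_cases hgI : g ∈ I
  · exact Or.inl (Or.inl ⟨hgI, trivial⟩)
  by_cases hgN : g ∈ closedNbhd G I
  · obtain ⟨i, hi, hig⟩ := hgN.resolve_left hgI
    obtain ⟨h', hh'⟩ := hH h
    exact Or.inr ⟨(i, h'), Or.inl ⟨hi, trivial⟩, hig, hh'.symm⟩
  by_cases hhJ : h ∈ J
  · exact Or.inl (Or.inr ⟨hgN, hhJ⟩)
  obtain ⟨u, hu, hgu⟩ : ∃ u ∉ closedNbhd G I, G.Adj g u := by
    by_contra! hno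
    exact hGiso g ⟨I, hI, hgN, hno⟩
  have hh : h ∈ closedNbhd H J := (isMaxIndep_iff.1 hJ).2 ▸ mem_univ h
  obtain ⟨j, hj, hjh⟩ := hh.resolve_left hhJ
  exact Or.inr ⟨(u, j), Or.inr ⟨hu, hj⟩, hgu.symm, hjh⟩

lemma ncard_directProd_maxIndep [Finite V] [Finite W] (I : Set V) (J : Set W) :
    (I ×ˢ univ ∪ (closedNbhd G I)ᶜ ×ˢ J).ncard
      = I.ncard * Nat.card W + (closedNbhd G I)ᶜ.ncard * J.ncard := by
  have hdisj : Disjoint (I ×ˢ (univ : Set W)) ((closedNbhd G I)ᶜ ×ˢ J) :=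
    disjoint_left.2 fun _ h1 h2 => h2.1 (Or.inl h1.1)
  rw [ncard_union_eq hdisj, ncard_prod, ncard_prod, ncard_univ]

variable [Finite V] [Finite W] (hGiso : ∀ v, ¬ Isolatable G v) (hH : NoIsolated H)
  (hwc : WellCovered (directProd G H))
include hGiso hH hwc

lemma ncard_mul_card_eq_ncard_closedNbhd_mul {J : Set W} (hJ : IsMaxIndep H J)
    {I : Set V} (hI : IsIndep G I) :
    I.ncard * Nat.card W = (closedNbhd G I).ncard * J.ncard := by
  have h := hwc _ _ (isMaxIndep_directProd hGiso hH hI hJ)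
    (isMaxIndep_directProd hGiso hH (isIndep_empty G) hJ)
  rw [ncard_directProd_maxIndep, ncard_directProd_maxIndep, closedNbhd_empty, compl_empty,
    ncard_univ, ← ncard_add_ncard_compl (closedNbhd G I)] at h
  simp only [ncard_empty, zero_mul, zero_add] at h
  linarith

lemma adj_of_adj_of_adj [Nonempty W] {u w v : V} (huw : G.Adj u w) (hwv : G.Adj w v)
    (huv : u ≠ v) : G.Adj u v := by
  by_contra hnadj
  obtain ⟨J, hJ⟩ := exists_isMaxIndep H
  have key {I : Set V} := ncard_mul_card_eq_ncard_closedNbhd_mul hGiso hH hwc hJ (I := I)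
  have hu := key (isIndep_singleton u)
  have hv := key (isIndep_singleton v)
  have huv' := key (isIndep_pair hnadj)
  rw [ncard_pair huv, insert_eq, closedNbhd_union] at huv'
  rw [ncard_singleton] at hu hv
  have hinter := ncard_union_add_ncard_inter (closedNbhd G {u}) (closedNbhd G {v})
  have hw : w ∈ closedNbhd G {u} ∩ closedNbhd G {v} :=
    ⟨mem_closedNbhd_singleton.2 (Or.inr huw), mem_closedNbhd_singleton.2 (Or.inr hwv.symm)⟩
  have hpos : 0 < (closedNbhd G {u} ∩ closedNbhd G {v}).ncard := (ncard_pos).2 ⟨w, hw⟩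
  have hJpos : 0 < J.ncard := (ncard_pos).2 hJ.nonempty
  nlinarith

lemma eq_top_of_wellCovered_directProd [Nonempty W] (hG : G.Preconnected) : G = ⊤ :=
  eq_top_of_adj_of_adj hG fun _ _ _ => adj_of_adj_of_adj hGiso hH hwc

lemma card_le_card_of_wellCovered_directProd [Nonempty W] {v : V}
    (hv : closedNbhd G {v} = univ) : Nat.card V ≤ Nat.card W := by
  obtain ⟨J, hJ⟩ := exists_isMaxIndep H
  have h := ncard_mul_card_eq_ncard_closedNbhd_mul hGiso hH hwc hJ (isIndep_singleton v)
  rw [ncard_singleton, one_mul, hv, ncard_univ] at h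
  rw [h]
  exact Nat.le_mul_of_pos_right _ ((ncard_pos).2 hJ.nonempty)

end DirectProduct

end

theorem stmt17 {V W : Type*} [Fintype V] [Fintype W] (G : SimpleGraph V) (H : SimpleGraph W)
    (hGconn : G.Connected) (hGnt : 1 < Fintype.card V)
    (hHconn : H.Connected) (hHnt : 1 < Fintype.card W)
    (hGiso : ∀ v, ¬ Isolatable G v) (hHiso : ∀ w, ¬ Isolatable H w)
    (hwc : WellCovered (directProd G H)) :
    G = ⊤ ∧ H = ⊤ ∧ Fintype.card V = Fintype.card W := by
  have : Nontrivial V := Fintype.one_lt_card_iff_nontrivial.1 hGnt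
  have : Nontrivial W := Fintype.one_lt_card_iff_nontrivial.1 hHnt
  have hG : NoIsolated G := hGconn.preconnected.exists_adj_of_nontrivial
  have hH : NoIsolated H := hHconn.preconnected.exists_adj_of_nontrivial
  have hwc' := hwc.of_iso (directProdComm G H)
  have hGtop := eq_top_of_wellCovered_directProd hGiso hH hwc hGconn.preconnected
  have hHtop := eq_top_of_wellCovered_directProd hHiso hG hwc' hHconn.preconnected
  obtain ⟨v⟩ := ‹Nontrivial V›.to_nonempty
  obtain ⟨w⟩ := ‹Nontrivial W›.to_nonempty
  refine ⟨hGtop, hHtop, ?_⟩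
  simp only [← Nat.card_eq_fintype_card]
  exact le_antisymm
    (card_le_card_of_wellCovered_directProd hGiso hH hwc (hGtop ▸ closedNbhd_top_singleton v))
    (card_le_card_of_wellCovered_directProd hHiso hG hwc' (hHtop ▸ closedNbhd_top_singleton w))
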